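/- arXiv:1510.07337 — 2 statements merged into one kernel-verified Lean document; each statement's English description precedes it below -/
import Mathlib

section
/- There exists a constant C > 0 such that for every g ∈ L²(0,1), the function x ↦ (1/(1−x²)²)∫_x^1 (1−t²) g(t) dt belongs to L²(0,1) and ‖(1/(1−x²)²)∫_x^1 (1−t²)g(t) dt‖_{L²(0,1)} ≤ C‖g‖_{L²(0,1)}. -/
/-!
Write `T g x = (1 - x²)⁻² ∫ₓ¹ (1 - t²) g t dt`. Since `1 - t² ≤ 2 (1 - t)` and
`(1 - x)² ≤ (1 - x²)²` on `[0, 1]`, Cauchy–Schwarz with the weight `1 - t` on `[x, 1]` gives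
`|T g x|² ≤ 2 (1 - x)⁻² ∫ₓ¹ (1 - t) |g t|² dt`. Integrating in `x` and exchanging the order of
integration, the inner integral `∫₀ᵗ (1 - x)⁻² dx ≤ (1 - t)⁻¹` cancels the weight `1 - t`, so
`‖T g‖² ≤ 2 ‖g‖²`, and `C = √2` works.
-/

open MeasureTheory Set
open scoped ENNReal

theorem ENNReal.lintegral_mul_sq_le {α : Type*} [MeasurableSpace α] {μ : Measure α}
    {w G : α → ℝ≥0∞} (hw : AEMeasurable w μ) (hG : AEMeasurable G μ) :
    (∫⁻ a, w a * G a ∂μ) ^ 2 ≤ (∫⁻ a, w a ∂μ) * ∫⁻ a, w a * G a ^ 2 ∂μ := by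
  have hsqrt : ∀ a, w a ^ (2⁻¹ : ℝ) * (w a * G a ^ 2) ^ (2⁻¹ : ℝ) = w a * G a := fun a => by
    rw [← ENNReal.mul_rpow_of_nonneg _ _ (by norm_num), ← mul_assoc, ← sq, ← mul_pow,
      ← ENNReal.rpow_two, ← ENNReal.rpow_mul]
    norm_num
  have holder := ENNReal.lintegral_mul_norm_pow_le hw (hw.mul (hG.pow_const 2))
    (p := 2⁻¹) (q := 2⁻¹) (by norm_num) (by norm_num) (by norm_num)
  simp only [Pi.mul_apply, hsqrt] at holder
  calc (∫⁻ a, w a * G a ∂μ) ^ 2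
      ≤ ((∫⁻ a, w a ∂μ) ^ (2⁻¹ : ℝ) * (∫⁻ a, w a * G a ^ 2 ∂μ) ^ (2⁻¹ : ℝ)) ^ 2 := by gcongr
    _ = (∫⁻ a, w a ∂μ) * ∫⁻ a, w a * G a ^ 2 ∂μ := by
      rw [mul_pow, ← ENNReal.rpow_two, ← ENNReal.rpow_two, ← ENNReal.rpow_mul,
        ← ENNReal.rpow_mul]
      norm_num

theorem eLpNorm_le_of_lintegral_rpow_le {α E F : Type*} [MeasurableSpace α] {μ : Measure α}
    [ENorm E] [ENorm F] {f : α → E} {g : α → F} {p : ℝ≥0∞} (hp0 : p ≠ 0) (hp : p ≠ ∞)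
    {c : ℝ≥0∞} (h : ∫⁻ a, ‖f a‖ₑ ^ p.toReal ∂μ ≤ c * ∫⁻ a, ‖g a‖ₑ ^ p.toReal ∂μ) :
    eLpNorm f p μ ≤ c ^ (1 / p.toReal) * eLpNorm g p μ := by
  rw [eLpNorm_eq_lintegral_rpow_enorm_toReal hp0 hp, eLpNorm_eq_lintegral_rpow_enorm_toReal hp0 hp,
    ← ENNReal.mul_rpow_of_nonneg _ _ (by positivity)]
  gcongr

theorem lintegral_Ioc_mul_lintegral_Ioc {μ : Measure ℝ} [SFinite μ] {w F : ℝ → ℝ≥0∞}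
    (hw : Measurable w) (hF : Measurable F) (a b : ℝ) :
    ∫⁻ x in Ioc a b, w x * ∫⁻ t in Ioc x b, F t ∂μ ∂μ =
      ∫⁻ t in Ioc a b, (∫⁻ x in Ioo a t, w x ∂μ) * F t ∂μ := by
  let K : ℝ → ℝ → ℝ≥0∞ := fun x t =>
    {p : ℝ × ℝ | p.1 < p.2}.indicator (fun p => w p.1 * F p.2) (x, t)
  have hK : Measurable (Function.uncurry K) :=
    ((hw.comp measurable_fst).mul (hF.comp measurable_snd)).indicator
      (measurableSet_lt measurable_fst measurable_snd)
  calc ∫⁻ x in Ioc a b, w x * ∫⁻ t in Ioc x b, F t ∂μ ∂μ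
      = ∫⁻ x in Ioc a b, ∫⁻ t in Ioc a b, K x t ∂μ ∂μ := by
        refine setLIntegral_congr_fun measurableSet_Ioc fun x hx => ?_
        have hKx : ∀ t, K x t = (Ioi x).indicator (fun t => w x * F t) t := fun t => by
          simp only [K, indicator_apply, mem_ofPred_eq, mem_Ioi]
        rw [lintegral_congr hKx, lintegral_indicator measurableSet_Ioi,
          Measure.restrict_restrict measurableSet_Ioi, inter_comm, Ioc_inter_Ioi,
          max_eq_right hx.1.le, lintegral_const_mul _ hF]
    _ = ∫⁻ t in Ioc a b, ∫⁻ x in Ioc a b, K x t ∂μ ∂μ :=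
        lintegral_lintegral_swap hK.aemeasurable
    _ = ∫⁻ t in Ioc a b, (∫⁻ x in Ioo a t, w x ∂μ) * F t ∂μ := by
        refine setLIntegral_congr_fun measurableSet_Ioc fun t ht => ?_
        have hKt : ∀ x, K x t = (Iio t).indicator (fun x => w x * F t) x := fun x => by
          simp only [K, indicator_apply, mem_ofPred_eq, mem_Iio]
        have hset : Iio t ∩ Ioc a b = Ioo a t := by
          ext x
          simp only [mem_inter_iff, mem_Iio, mem_Ioc, mem_Ioo]
          constructor
          · rintro ⟨hxt, hax, -⟩; exact ⟨hax, hxt⟩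
          · rintro ⟨hax, hxt⟩; exact ⟨hxt, hax, hxt.le.trans ht.2⟩
        rw [lintegral_congr hKt, lintegral_indicator measurableSet_Iio,
          Measure.restrict_restrict measurableSet_Iio, hset, lintegral_mul_const _ hw]

theorem lintegral_Ioo_inv_one_sub_sq_le {a t : ℝ} (ht : t < 1) :
    ∫⁻ x in Ioo a t, ENNReal.ofReal ((1 - x) ^ 2)⁻¹ ≤ ENNReal.ofReal (1 - t)⁻¹ := by
  have hderiv : ∀ x ∈ Ioo a t,
      HasDerivWithinAt (fun x : ℝ => (1 - x)⁻¹) ((1 - x) ^ 2)⁻¹ (Ioo a t) x := fun x hx => by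
    have h := ((hasDerivAt_id' x).const_sub (1 : ℝ)).fun_inv (sub_ne_zero.2 (by linarith [hx.2]))
    rw [neg_neg, one_div] at h
    exact h.hasDerivWithinAt
  have hmono : MonotoneOn (fun x : ℝ => (1 - x)⁻¹) (Ioo a t) := fun x _ y hy hxy =>
    inv_anti₀ (by linarith [hy.2]) (by linarith)
  have himage : (fun x : ℝ => (1 - x)⁻¹) '' Ioo a t ⊆ Ioo 0 (1 - t)⁻¹ := by
    rintro _ ⟨x, hx, rfl⟩
    exact ⟨inv_pos.2 (by linarith [hx.2]), inv_strictAnti₀ (by linarith) (by linarith [hx.2])⟩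
  rw [lintegral_deriv_eq_volume_image_of_monotoneOn measurableSet_Ioo hderiv hmono]
  calc volume _ ≤ volume (Ioo 0 (1 - t)⁻¹) := measure_mono himage
    _ = ENNReal.ofReal (1 - t)⁻¹ := by rw [Real.volume_Ioo, sub_zero]

theorem lintegral_Ioo_inv_one_sub_sq_mul_lintegral_Ioc_le {a : ℝ} {F : ℝ → ℝ≥0∞}
    (hF : AEMeasurable F (volume.restrict (Ioo a 1))) :
    ∫⁻ x in Ioo a 1, ENNReal.ofReal ((1 - x) ^ 2)⁻¹ *
        ∫⁻ t in Ioc x 1, ENNReal.ofReal (1 - t) * F t ≤ ∫⁻ t in Ioo a 1, F t := by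
  rw [Measure.restrict_congr_set Ioo_ae_eq_Ioc] at hF ⊢
  set F' := hF.mk F
  have hinner : ∀ x ∈ Ioc a 1, ∫⁻ t in Ioc x 1, ENNReal.ofReal (1 - t) * F t =
      ∫⁻ t in Ioc x 1, ENNReal.ofReal (1 - t) * F' t := fun x hx =>
    lintegral_congr_ae <| (ae_restrict_of_ae_restrict_of_subset (Ioc_subset_Ioc_left hx.1.le)
      hF.ae_eq_mk).mono fun t ht => by simp only [ht, F']
  have hweight : ∀ t ∈ Ioc a 1, (∫⁻ x in Ioo a t, ENNReal.ofReal ((1 - x) ^ 2)⁻¹) *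
      (ENNReal.ofReal (1 - t) * F' t) ≤ F' t := by
    rintro t ⟨-, ht⟩
    rcases ht.lt_or_eq with ht | rfl
    · calc _ ≤ ENNReal.ofReal (1 - t)⁻¹ * (ENNReal.ofReal (1 - t) * F' t) := by
            gcongr
            exact lintegral_Ioo_inv_one_sub_sq_le ht
        _ = F' t := by
            rw [← mul_assoc, ← ENNReal.ofReal_mul (inv_nonneg.2 (by linarith)),
              inv_mul_cancel₀ (by linarith), ENNReal.ofReal_one, one_mul]
    · simp
  calc _ = ∫⁻ x in Ioc a 1, ENNReal.ofReal ((1 - x) ^ 2)⁻¹ *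
        ∫⁻ t in Ioc x 1, ENNReal.ofReal (1 - t) * F' t :=
        setLIntegral_congr_fun measurableSet_Ioc fun x hx => by rw [hinner x hx]
    _ = ∫⁻ t in Ioc a 1, (∫⁻ x in Ioo a t, ENNReal.ofReal ((1 - x) ^ 2)⁻¹) *
        (ENNReal.ofReal (1 - t) * F' t) :=
        lintegral_Ioc_mul_lintegral_Ioc (by fun_prop)
          ((ENNReal.measurable_ofReal.comp (by fun_prop)).mul hF.measurable_mk) a 1
    _ ≤ ∫⁻ t in Ioc a 1, F' t := setLIntegral_mono' measurableSet_Ioc hweight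
    _ = ∫⁻ t in Ioc a 1, F t := lintegral_congr_ae hF.ae_eq_mk.symm

theorem lintegral_Ioc_one_sub {x : ℝ} (hx : x ≤ 1) :
    ∫⁻ t in Ioc x 1, ENNReal.ofReal (1 - t) = ENNReal.ofReal ((1 - x) ^ 2 / 2) := by
  rw [← ofReal_integral_eq_lintegral_ofReal (Continuous.integrableOn_Ioc (by fun_prop))
    ((ae_restrict_mem measurableSet_Ioc).mono fun t ht => sub_nonneg.2 ht.2),
    ← intervalIntegral.integral_of_le hx, intervalIntegral.integral_comp_sub_left (fun t => t),
    integral_id]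
  ring_nf

theorem Complex.enorm_ofReal_of_nonneg {r : ℝ} (hr : 0 ≤ r) : ‖(r : ℂ)‖ₑ = ENNReal.ofReal r := by
  rw [← ofReal_norm, Complex.norm_real, Real.norm_of_nonneg hr]

noncomputable def tailOperator (g : ℝ → ℂ) (x : ℝ) : ℂ :=
  ((((1 - x^2)^2)⁻¹ : ℝ) : ℂ) * ∫ t in x..(1:ℝ), ((1 - t^2 : ℝ) : ℂ) * g t

theorem continuousOn_tailOperator {g : ℝ → ℂ} (hg : IntegrableOn g (Icc 0 1)) :
    ContinuousOn (tailOperator g) (Ico 0 1) := by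
  have hintegrand : IntegrableOn (fun t => ((1 - t ^ 2 : ℝ) : ℂ) * g t) (uIcc 0 1) := by
    rw [uIcc_of_le zero_le_one]
    exact hg.continuousOn_mul (by fun_prop) isCompact_Icc
  have hprimitive := intervalIntegral.continuousOn_primitive_interval_left hintegrand
  rw [uIcc_of_le zero_le_one] at hprimitive
  refine ContinuousOn.mul ?_ (hprimitive.mono Ico_subset_Icc_self)
  refine Complex.continuous_ofReal.comp_continuousOn (ContinuousOn.inv₀ (by fun_prop) ?_)
  intro x hx
  have hpos : 0 < 1 - x ^ 2 := by nlinarith [hx.1, hx.2]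
  positivity

theorem enorm_tailOperator_sq_le {g : ℝ → ℂ} {x : ℝ} (hx0 : 0 ≤ x) (hx1 : x < 1)
    (hg : AEStronglyMeasurable g (volume.restrict (Ioc x 1))) :
    ‖tailOperator g x‖ₑ ^ 2 ≤ ENNReal.ofReal (2 * ((1 - x) ^ 2)⁻¹) *
      ∫⁻ t in Ioc x 1, ENNReal.ofReal (1 - t) * ‖g t‖ₑ ^ 2 := by
  have hintegral : ‖∫ t in x..(1:ℝ), ((1 - t^2 : ℝ) : ℂ) * g t‖ₑ ≤
      2 * ∫⁻ t in Ioc x 1, ENNReal.ofReal (1 - t) * ‖g t‖ₑ := by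
    rw [intervalIntegral.integral_of_le hx1.le, ← lintegral_const_mul' _ _ ENNReal.ofNat_ne_top]
    refine (enorm_integral_le_lintegral_enorm _).trans (setLIntegral_mono' measurableSet_Ioc ?_)
    intro t ht
    have ht0 : 0 ≤ t := hx0.trans ht.1.le
    rw [enorm_mul, Complex.enorm_ofReal_of_nonneg (by nlinarith [ht.2]), ← mul_assoc,
      ← ENNReal.ofReal_ofNat, ← ENNReal.ofReal_mul zero_le_two]
    gcongr
    nlinarith [ht.2]
  have hweight : (((1 - x ^ 2) ^ 2)⁻¹) ^ 2 * (4 * ((1 - x) ^ 2 / 2)) ≤ 2 * ((1 - x) ^ 2)⁻¹ := by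
    have hpos : 0 < 1 - x := by linarith
    have h1 : 1 ≤ (1 + x) ^ 4 := one_le_pow₀ (by linarith)
    rw [show 1 - x ^ 2 = (1 - x) * (1 + x) by ring]
    field_simp
    nlinarith [pow_pos hpos 2]
  calc ‖tailOperator g x‖ₑ ^ 2
      = ENNReal.ofReal (((1 - x ^ 2) ^ 2)⁻¹) ^ 2 *
          ‖∫ t in x..(1:ℝ), ((1 - t^2 : ℝ) : ℂ) * g t‖ₑ ^ 2 := by
        rw [tailOperator, enorm_mul, Complex.enorm_ofReal_of_nonneg (by positivity), mul_pow]
    _ ≤ ENNReal.ofReal (((1 - x ^ 2) ^ 2)⁻¹) ^ 2 *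
          (4 * ((∫⁻ t in Ioc x 1, ENNReal.ofReal (1 - t)) *
            ∫⁻ t in Ioc x 1, ENNReal.ofReal (1 - t) * ‖g t‖ₑ ^ 2)) := by
        gcongr
        calc _ ≤ (2 * ∫⁻ t in Ioc x 1, ENNReal.ofReal (1 - t) * ‖g t‖ₑ) ^ 2 := by gcongr
          _ ≤ _ := by
            rw [mul_pow]
            exact mul_le_mul' (by norm_num) (ENNReal.lintegral_mul_sq_le
              (by fun_prop : Measurable fun t : ℝ => ENNReal.ofReal (1 - t)).aemeasurable hg.enorm)
    _ ≤ ENNReal.ofReal (2 * ((1 - x) ^ 2)⁻¹) *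
          ∫⁻ t in Ioc x 1, ENNReal.ofReal (1 - t) * ‖g t‖ₑ ^ 2 := by
        rw [lintegral_Ioc_one_sub hx1.le, ← mul_assoc (4 : ℝ≥0∞), ← mul_assoc,
          ← ENNReal.ofReal_ofNat 4, ← ENNReal.ofReal_mul zero_le_four,
          ← ENNReal.ofReal_pow (by positivity), ← ENNReal.ofReal_mul (by positivity)]
        gcongr

theorem lintegral_enorm_tailOperator_sq_le {g : ℝ → ℂ}
    (hg : AEStronglyMeasurable g (volume.restrict (Ioo 0 1))) :
    ∫⁻ x in Ioo 0 1, ‖tailOperator g x‖ₑ ^ 2 ≤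
      ENNReal.ofReal 2 * ∫⁻ x in Ioo 0 1, ‖g x‖ₑ ^ 2 := by
  have hg' : AEStronglyMeasurable g (volume.restrict (Ioc 0 1)) := by
    rwa [← Measure.restrict_congr_set Ioo_ae_eq_Ioc]
  calc _ ≤ ∫⁻ x in Ioo 0 1, ENNReal.ofReal 2 * (ENNReal.ofReal ((1 - x) ^ 2)⁻¹ *
          ∫⁻ t in Ioc x 1, ENNReal.ofReal (1 - t) * ‖g t‖ₑ ^ 2) :=
        setLIntegral_mono' measurableSet_Ioo fun x hx =>
          (enorm_tailOperator_sq_le hx.1.le hx.2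
            (hg'.mono_set (Ioc_subset_Ioc_left hx.1.le))).trans_eq
            (by rw [ENNReal.ofReal_mul zero_le_two, mul_assoc])
    _ = ENNReal.ofReal 2 * ∫⁻ x in Ioo 0 1, ENNReal.ofReal ((1 - x) ^ 2)⁻¹ *
          ∫⁻ t in Ioc x 1, ENNReal.ofReal (1 - t) * ‖g t‖ₑ ^ 2 :=
        lintegral_const_mul' _ _ ENNReal.ofReal_ne_top
    _ ≤ ENNReal.ofReal 2 * ∫⁻ x in Ioo 0 1, ‖g x‖ₑ ^ 2 := by
        gcongr ENNReal.ofReal 2 * ?_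
        exact lintegral_Ioo_inv_one_sub_sq_mul_lintegral_Ioc_le (hg.enorm.pow_const 2)

theorem eLpNorm_tailOperator_le {g : ℝ → ℂ}
    (hg : AEStronglyMeasurable g (volume.restrict (Ioo 0 1))) :
    eLpNorm (tailOperator g) 2 (volume.restrict (Ioo 0 1)) ≤
      ENNReal.ofReal √2 * eLpNorm g 2 (volume.restrict (Ioo 0 1)) := by
  calc eLpNorm (tailOperator g) 2 (volume.restrict (Ioo 0 1))
      ≤ ENNReal.ofReal 2 ^ (1 / (2 : ℝ≥0∞).toReal) * eLpNorm g 2 (volume.restrict (Ioo 0 1)) :=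
        eLpNorm_le_of_lintegral_rpow_le two_ne_zero ENNReal.ofNat_ne_top
          (by simpa only [ENNReal.toReal_ofNat, ENNReal.rpow_two] using
            lintegral_enorm_tailOperator_sq_le hg)
    _ = ENNReal.ofReal √2 * eLpNorm g 2 (volume.restrict (Ioo 0 1)) := by
        rw [ENNReal.toReal_ofNat, ENNReal.ofReal_rpow_of_nonneg zero_le_two (by norm_num),
          Real.sqrt_eq_rpow]

/-- There is a constant `C > 0` such that for every `g ∈ L²(0,1)` the function
`x ↦ (1/(1-x²)²)∫_x^1 (1-t²)g(t) dt` belongs to `L²(0,1)` with norm at most `C‖g‖`. -/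
theorem CE_application_two : ∃ C : ℝ, 0 < C ∧
    ∀ g : ℝ → ℂ, MemLp g 2 (volume.restrict (Ioo (0:ℝ) 1)) →
      MemLp (fun x => ((((1 - x^2)^2)⁻¹ : ℝ) : ℂ) *
          ∫ t in x..(1:ℝ), ((1 - t^2 : ℝ) : ℂ) * g t) 2
        (volume.restrict (Ioo (0:ℝ) 1)) ∧
      eLpNorm (fun x => ((((1 - x^2)^2)⁻¹ : ℝ) : ℂ) *
            ∫ t in x..(1:ℝ), ((1 - t^2 : ℝ) : ℂ) * g t) 2
          (volume.restrict (Ioo (0:ℝ) 1))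
        ≤ ENNReal.ofReal C * eLpNorm g 2 (volume.restrict (Ioo (0:ℝ) 1)) := by
  refine ⟨√2, by positivity, fun g hg => ?_⟩
  have hint : IntegrableOn g (Icc 0 1) := by
    rw [integrableOn_Icc_iff_integrableOn_Ioo]
    exact hg.integrable one_le_two
  have hmeas : AEStronglyMeasurable (tailOperator g) (volume.restrict (Ioo 0 1)) :=
    ((continuousOn_tailOperator hint).mono Ioo_subset_Ico_self).aestronglyMeasurable
      measurableSet_Ioo
  have hbound := eLpNorm_tailOperator_le hg.1
  exact ⟨⟨hmeas, hbound.trans_lt (ENNReal.mul_lt_top ENNReal.ofReal_lt_top hg.2)⟩, hbound⟩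
end

section
/- For every n ∈ ℕ₀, the Legendre polynomial P_n belongs to D(S): P_n ∈ Δ_{2,max}, lim_{x→±1}[P_n,1]₂(x) = 0 and lim_{x→±1}[P_n,x]₂(x) = 0; moreover ℓ²[P_n](x) = n²(n+1)²P_n(x) for all x ∈ (−1,1). -/
open MeasureTheory Set Filter

noncomputable section

/-- `f` is locally absolutely continuous on `(-1,1)` with a.e. derivative `f'`,
expressed via the fundamental theorem of calculus. -/
def LocACOn (f f' : ℝ → ℂ) : Prop :=
  ∀ x ∈ Ioo (-1:ℝ) 1, ∀ y ∈ Ioo (-1:ℝ) 1,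
    IntervalIntegrable f' volume x y ∧ f y - f x = ∫ t in x..y, f' t

/-- membership in `L²(-1,1)` -/
def L2I (g : ℝ → ℂ) : Prop :=
  MemLp g 2 (volume.restrict (Ioo (-1:ℝ) 1))

/-- the Legendre expression `ℓ[f] = -((1-x²)f′)′ = -(1-x²)f″ + 2x f′`. -/
def leg (f1 f2 : ℝ → ℂ) (x : ℝ) : ℂ :=
  ((2*x : ℝ) : ℂ) * f1 x - ((1 - x^2 : ℝ) : ℂ) * f2 x

/-- the derivative `(ℓ[f])′ = 2f′ + 4x f″ - (1-x²)f‴`. -/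
def legD (f1 f2 f3 : ℝ → ℂ) (x : ℝ) : ℂ :=
  (2 : ℂ) * f1 x + ((4*x : ℝ) : ℂ) * f2 x - ((1 - x^2 : ℝ) : ℂ) * f3 x

/-- the second derivative `(ℓ[f])″ = 6f″ + 6x f‴ - (1-x²)f⁗`. -/
def legDD (f2 f3 f4 : ℝ → ℂ) (x : ℝ) : ℂ :=
  (6 : ℂ) * f2 x + ((6*x : ℝ) : ℂ) * f3 x - ((1 - x^2 : ℝ) : ℂ) * f4 x

/-- `ℓ²[f] = ((1-x²)²f″)″ - 2((1-x²)f′)′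
           = (1-x²)²f⁗ - 8x(1-x²)f‴ + (14x²-6)f″ + 4x f′`. -/
def legSq (f1 f2 f3 f4 : ℝ → ℂ) (x : ℝ) : ℂ :=
  (((1 - x^2)^2 : ℝ) : ℂ) * f4 x - ((8*x*(1 - x^2) : ℝ) : ℂ) * f3 x
    + ((14*x^2 - 6 : ℝ) : ℂ) * f2 x + ((4*x : ℝ) : ℂ) * f1 x

/-- `((1-x²)²f″)′ = (1-x²)²f‴ - 4x(1-x²)f″`. -/
def sqTermD (f2 f3 : ℝ → ℂ) (x : ℝ) : ℂ :=
  (((1 - x^2)^2 : ℝ) : ℂ) * f3 x - ((4*x*(1 - x^2) : ℝ) : ℂ) * f2 x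

/-- `[f,1]₂(x) = ((1-x²)²f″)′ - 2(1-x²)f′`. -/
def bket1 (f1 f2 f3 : ℝ → ℂ) (x : ℝ) : ℂ :=
  sqTermD f2 f3 x - ((2*(1 - x^2) : ℝ) : ℂ) * f1 x

/-- `[f,x]₂(x) = x[f,1]₂(x) - (1-x²)²f″ + 2(1-x²)f`. -/
def bketX (f f1 f2 f3 : ℝ → ℂ) (x : ℝ) : ℂ :=
  (x : ℂ) * bket1 f1 f2 f3 x - (((1 - x^2)^2 : ℝ) : ℂ) * f2 x
    + ((2*(1 - x^2) : ℝ) : ℂ) * f x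

/-- the maximal domain `Δ_{2,max}` of `ℓ²` in `L²(-1,1)`:
`f, f′, f″, f‴` locally absolutely continuous and `f, ℓ²[f] ∈ L²(-1,1)`. -/
def Delta2Max (f f1 f2 f3 f4 : ℝ → ℂ) : Prop :=
  LocACOn f f1 ∧ LocACOn f1 f2 ∧ LocACOn f2 f3 ∧ LocACOn f3 f4 ∧
    L2I f ∧ L2I (legSq f1 f2 f3 f4)

/-- the filter `x → 1⁻` from within `(-1,1)`. -/
def atOne : Filter ℝ := nhdsWithin 1 (Ioo (-1:ℝ) 1)

/-- the filter `x → -1⁺` from within `(-1,1)`. -/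
def atNegOne : Filter ℝ := nhdsWithin (-1) (Ioo (-1:ℝ) 1)

/-- the GKN domain `D(S)`. -/
def DS (f f1 f2 f3 f4 : ℝ → ℂ) : Prop :=
  Delta2Max f f1 f2 f3 f4 ∧
  Tendsto (bket1 f1 f2 f3) atOne (nhds 0) ∧
  Tendsto (bket1 f1 f2 f3) atNegOne (nhds 0) ∧
  Tendsto (bketX f f1 f2 f3) atOne (nhds 0) ∧
  Tendsto (bketX f f1 f2 f3) atNegOne (nhds 0)

/-- the maximal domain `Δ_{1,max}` of `ℓ` in `L²(-1,1)`. -/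
def Delta1Max (f f1 f2 : ℝ → ℂ) : Prop :=
  LocACOn f f1 ∧ LocACOn f1 f2 ∧ L2I f ∧ L2I (leg f1 f2)

/-- the domain `D(A)` of the Legendre polynomials operator. -/
def DA (f f1 f2 : ℝ → ℂ) : Prop :=
  Delta1Max f f1 f2 ∧
  Tendsto (fun x => ((1 - x^2 : ℝ) : ℂ) * f1 x) atOne (nhds 0) ∧
  Tendsto (fun x => ((1 - x^2 : ℝ) : ℂ) * f1 x) atNegOne (nhds 0)

/-- the algebraic domain `D(A²) = {f ∈ D(A) : ℓ[f] ∈ D(A)}`. -/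
def DA2 (f f1 f2 f3 f4 : ℝ → ℂ) : Prop :=
  DA f f1 f2 ∧ DA (leg f1 f2) (legD f1 f2 f3) (legDD f2 f3 f4)

/-! The square of the Legendre expression is its iterate, `ℓ² = ℓ ∘ ℓ`, so a polynomial
eigenfunction of `ℓ` with eigenvalue `n(n+1)` is one of `ℓ²` with eigenvalue `n²(n+1)²`.
Polynomials are smooth up to `±1`, hence locally absolutely continuous and in `L²(-1,1)`;
and apart from `x[f,1]₂`, every term of `[f,1]₂` and `[f,x]₂` carries a factor `1 - x²`, so for such `f` both brackets tend to their value `0` at `±1`. -/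

open Polynomial Topology

def cplxEval (Q : ℝ[X]) : ℝ → ℂ := fun x => ((Q.eval x : ℝ) : ℂ)

lemma continuous_cplxEval (Q : ℝ[X]) : Continuous (cplxEval Q) :=
  Complex.continuous_ofReal.comp Q.continuous

lemma locACOn_cplxEval (Q : ℝ[X]) : LocACOn (cplxEval Q) (cplxEval (derivative Q)) := by
  intro x _ y _
  refine ⟨(continuous_cplxEval _).intervalIntegrable x y, ?_⟩
  simp only [cplxEval]
  rw [intervalIntegral.integral_ofReal,
    intervalIntegral.integral_eq_sub_of_hasDerivAt (fun t _ => Q.hasDerivAt t)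
      (Q.derivative.continuous.intervalIntegrable x y)]
  push_cast
  rfl

lemma l2I_of_continuousOn {g : ℝ → ℂ} (hg : ContinuousOn g (Icc (-1) 1)) : L2I g := by
  obtain ⟨C, hC⟩ := isCompact_Icc.exists_bound_of_continuousOn hg
  refine MemLp.of_bound ((hg.mono Ioo_subset_Icc_self).aestronglyMeasurable measurableSet_Ioo) C ?_
  exact ae_restrict_of_forall_mem measurableSet_Ioo fun x hx => hC x (Ioo_subset_Icc_self hx)

/-- `-ℓ` on polynomials. -/
def legendreOp (Q : ℝ[X]) : ℝ[X] := derivative ((1 - X ^ 2) * derivative Q)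

lemma legendreOp_C_mul (a : ℝ) (Q : ℝ[X]) : legendreOp (C a * Q) = C a * legendreOp Q := by
  simp only [legendreOp, derivative_C_mul, mul_left_comm _ (C a)]

lemma legendreOp_legendreOp (Q : ℝ[X]) :
    legendreOp (legendreOp Q) =
      (1 - X ^ 2) ^ 2 * derivative (derivative (derivative (derivative Q)))
        - 8 * X * (1 - X ^ 2) * derivative (derivative (derivative Q))
        + (14 * X ^ 2 - 6) * derivative (derivative Q) + 4 * X * derivative Q := by
  simp only [legendreOp, derivative_mul, derivative_sub, derivative_one, derivative_X_pow_succ,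
    Nat.cast_one, map_add, map_one, pow_one, zero_sub, neg_mul, derivative_neg,
    add_zero, zero_mul, derivative_X, mul_one, zero_add, neg_add_rev]
  ring

lemma legSq_cplxEval (Q : ℝ[X]) (x : ℝ) :
    legSq (cplxEval (derivative Q)) (cplxEval (derivative (derivative Q)))
      (cplxEval (derivative (derivative (derivative Q))))
      (cplxEval (derivative (derivative (derivative (derivative Q))))) x
      = cplxEval (legendreOp (legendreOp Q)) x := by
  rw [legendreOp_legendreOp]
  simp [legSq, cplxEval]

lemma legSq_cplxEval_of_legendreOp_eq {Q : ℝ[X]} {μ : ℝ} (hQ : legendreOp Q = C μ * Q) (x : ℝ) :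
    legSq (cplxEval (derivative Q)) (cplxEval (derivative (derivative Q)))
      (cplxEval (derivative (derivative (derivative Q))))
      (cplxEval (derivative (derivative (derivative (derivative Q))))) x
      = ((μ ^ 2 : ℝ) : ℂ) * cplxEval Q x := by
  rw [legSq_cplxEval, hQ, legendreOp_C_mul, hQ, ← mul_assoc, ← C_mul, ← sq]
  simp [cplxEval]

lemma delta2Max_cplxEval (Q : ℝ[X]) :
    Delta2Max (cplxEval Q) (cplxEval (derivative Q)) (cplxEval (derivative (derivative Q)))
      (cplxEval (derivative (derivative (derivative Q))))
      (cplxEval (derivative (derivative (derivative (derivative Q))))) := by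
  refine ⟨locACOn_cplxEval _, locACOn_cplxEval _, locACOn_cplxEval _, locACOn_cplxEval _,
    l2I_of_continuousOn (continuous_cplxEval Q).continuousOn, l2I_of_continuousOn ?_⟩
  simp only [funext (legSq_cplxEval Q)]
  exact (continuous_cplxEval _).continuousOn

section Boundary

variable {f f1 f2 f3 : ℝ → ℂ} {a : ℝ}

lemma bket1_eq_zero_of_sq_eq_one (ha : a ^ 2 = 1) : bket1 f1 f2 f3 a = 0 := by
  simp [bket1, sqTermD, ha]

lemma bketX_eq_zero_of_sq_eq_one (ha : a ^ 2 = 1) : bketX f f1 f2 f3 a = 0 := by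
  simp [bketX, bket1_eq_zero_of_sq_eq_one ha, ha]

lemma tendsto_nhdsWithin_Ioo_zero {g : ℝ → ℂ} (hg : ContinuousWithinAt g (Icc (-1) 1) a)
    (h : g a = 0) : Tendsto g (𝓝[Ioo (-1) 1] a) (𝓝 0) :=
  h ▸ (hg.mono Ioo_subset_Icc_self).tendsto

theorem ds_of_continuousOn {f4 : ℝ → ℂ} (hΔ : Delta2Max f f1 f2 f3 f4)
    (hf : ContinuousOn f (Icc (-1) 1)) (hf1 : ContinuousOn f1 (Icc (-1) 1))
    (hf2 : ContinuousOn f2 (Icc (-1) 1)) (hf3 : ContinuousOn f3 (Icc (-1) 1)) :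
    DS f f1 f2 f3 f4 := by
  have h1 : ContinuousOn (bket1 f1 f2 f3) (Icc (-1) 1) := by
    unfold bket1 sqTermD; fun_prop
  have hX : ContinuousOn (bketX f f1 f2 f3) (Icc (-1) 1) := by
    unfold bketX; fun_prop
  have one_mem : (1 : ℝ) ∈ Icc (-1) 1 := by norm_num
  have neg_one_mem : (-1 : ℝ) ∈ Icc (-1) 1 := by norm_num
  exact ⟨hΔ,
    tendsto_nhdsWithin_Ioo_zero (h1 _ one_mem) (bket1_eq_zero_of_sq_eq_one (by norm_num)),
    tendsto_nhdsWithin_Ioo_zero (h1 _ neg_one_mem) (bket1_eq_zero_of_sq_eq_one (by norm_num)),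
    tendsto_nhdsWithin_Ioo_zero (hX _ one_mem) (bketX_eq_zero_of_sq_eq_one (by norm_num)),
    tendsto_nhdsWithin_Ioo_zero (hX _ neg_one_mem) (bketX_eq_zero_of_sq_eq_one (by norm_num))⟩

end Boundary

theorem legendre_poly_mem_DS_general (n : ℕ) (P : Polynomial ℝ)
    (hODE : Polynomial.derivative ((1 - Polynomial.X ^ 2) * Polynomial.derivative P)
      = Polynomial.C (-((n : ℝ) * ((n : ℝ) + 1))) * P) :
    DS (fun x => ((P.eval x : ℝ) : ℂ))
      (fun x => ((P.derivative.eval x : ℝ) : ℂ))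
      (fun x => ((P.derivative.derivative.eval x : ℝ) : ℂ))
      (fun x => ((P.derivative.derivative.derivative.eval x : ℝ) : ℂ))
      (fun x => ((P.derivative.derivative.derivative.derivative.eval x : ℝ) : ℂ)) ∧
    ∀ x ∈ Ioo (-1:ℝ) 1,
      legSq (fun x => ((P.derivative.eval x : ℝ) : ℂ))
        (fun x => ((P.derivative.derivative.eval x : ℝ) : ℂ))
        (fun x => ((P.derivative.derivative.derivative.eval x : ℝ) : ℂ))
        (fun x => ((P.derivative.derivative.derivative.derivative.eval x : ℝ) : ℂ)) x
        = ((n : ℂ)^2 * ((n : ℂ) + 1)^2) * ((P.eval x : ℝ) : ℂ) := by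
  refine ⟨ds_of_continuousOn (delta2Max_cplxEval P) (continuous_cplxEval _).continuousOn
    (continuous_cplxEval _).continuousOn (continuous_cplxEval _).continuousOn
    (continuous_cplxEval _).continuousOn, fun x _ => ?_⟩
  refine (legSq_cplxEval_of_legendreOp_eq hODE x).trans ?_
  simp only [cplxEval]
  push_cast
  ring

/-- For every `n ∈ ℕ₀`, the Legendre polynomial `P_n` — the polynomial solution of
`-((1-x²)y′)′ = n(n+1)y` normalized by `P_n(1) = 1` — belongs to `D(S)`, and
`ℓ²[P_n] = n²(n+1)² P_n` on `(-1,1)`. -/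
theorem legendre_poly_mem_DS (n : ℕ) (P : Polynomial ℝ)
    (hODE : Polynomial.derivative ((1 - Polynomial.X ^ 2) * Polynomial.derivative P)
      = Polynomial.C (-((n : ℝ) * ((n : ℝ) + 1))) * P)
    (hnorm : P.eval 1 = 1) :
    DS (fun x => ((P.eval x : ℝ) : ℂ))
      (fun x => ((P.derivative.eval x : ℝ) : ℂ))
      (fun x => ((P.derivative.derivative.eval x : ℝ) : ℂ))
      (fun x => ((P.derivative.derivative.derivative.eval x : ℝ) : ℂ))
      (fun x => ((P.derivative.derivative.derivative.derivative.eval x : ℝ) : ℂ)) ∧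
    ∀ x ∈ Ioo (-1:ℝ) 1,
      legSq (fun x => ((P.derivative.eval x : ℝ) : ℂ))
        (fun x => ((P.derivative.derivative.eval x : ℝ) : ℂ))
        (fun x => ((P.derivative.derivative.derivative.eval x : ℝ) : ℂ))
        (fun x => ((P.derivative.derivative.derivative.derivative.eval x : ℝ) : ℂ)) x
        = ((n : ℂ)^2 * ((n : ℂ) + 1)^2) * ((P.eval x : ℝ) : ℂ) :=
  legendre_poly_mem_DS_general n P hODE
end
end
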